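/- Let X and Y be locally compact Hausdorff spaces and let T : C₀(X)⁺ → C₀(Y)⁺ be a surjective map satisfying ‖T(f+g)‖ = ‖Tf + Tg‖ for all f, g ∈ C₀(X)⁺. Then T is additive (T(f+g) = Tf + Tg for all f, g ∈ C₀(X)⁺) and positively homogeneous (T(rf) = rTf for all r ≥ 0 and f ∈ C₀(X)⁺). -/

import Mathlib

/-!
Fix `y ∈ Y` and an open `W ∋ y`. By surjectivity there is `p ≥ 0` such that `T p` is a bump of
height `N` at `y` vanishing off `W`; for `N` large, `‖T a + T p‖` equals `N + T a y` up to the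
oscillation of `T a` on `W`. Since `‖T (a + b) + T p‖ = ‖T (a + b + p)‖ = ‖T b + T (a + p)‖`,
comparing both sides for well-chosen `W` and `N` yields successively
`T (f + g) ≤ T f + ‖T g‖`, `T (f + g) ≤ T f + T g` and, looking at a point where `T (f + p)`
nearly attains its norm, `T f + T g ≤ T (f + g)`. Homogeneity follows because
`r ↦ T (r • f) y` is then additive and monotone on `ℝ≥0`, hence linear.
-/

open scoped ZeroAtInfty

/-- The positive cone of `C₀(X, ℝ)`. -/
def posCone (X : Type*) [TopologicalSpace X] : Set C₀(X, ℝ) :=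
  {f | ∀ x, 0 ≤ f x}

open scoped NNReal
open Set

theorem AddMonoidHom.apply_eq_mul_apply_one_of_monotone (φ : ℝ≥0 →+ ℝ) (hφ : Monotone φ)
    (r : ℝ≥0) : φ r = r * φ 1 := by
  have hφ1 : 0 ≤ φ 1 := by simpa using hφ (zero_le_one' ℝ≥0)
  have hφnat (m : ℕ) : φ m = m * φ 1 := by simpa using map_nsmul φ m 1
  have hbound (n : ℕ) : n * |φ r - r * φ 1| ≤ φ 1 := by
    set k := ⌊(n : ℝ≥0) * r⌋₊
    have hk : (k : ℝ≥0) ≤ n * r := Nat.floor_le zero_le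
    have hk' : (n : ℝ≥0) * r < k + 1 := Nat.lt_floor_add_one _
    have hnr : φ (n * r) = n * φ r := by simpa using map_nsmul φ n r
    have hlo : k * φ 1 ≤ n * φ r := by
      rw [← hφnat, ← hnr]; exact hφ hk
    have hhi : n * φ r ≤ (k + 1) * φ 1 := by
      rw [← hnr, ← Nat.cast_add_one, ← hφnat]
      exact hφ (by exact_mod_cast hk'.le)
    rw [← abs_of_nonneg (Nat.cast_nonneg (α := ℝ) n), ← abs_mul, abs_le]
    have hk_real : (k : ℝ) ≤ n * r := by exact_mod_cast hk
    have hk'_real : (n : ℝ) * r < k + 1 := by exact_mod_cast hk'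
    constructor <;> nlinarith
  by_contra hne
  have hpos : 0 < |φ r - r * φ 1| := abs_pos.2 (sub_ne_zero.2 hne)
  obtain ⟨n, hn⟩ := exists_nat_gt (φ 1 / |φ r - r * φ 1|)
  rw [div_lt_iff₀ hpos] at hn
  linarith [hbound n]

section PosCone

variable {X Y : Type*} [TopologicalSpace X] [TopologicalSpace Y]

theorem zero_mem_posCone : (0 : C₀(X, ℝ)) ∈ posCone X := fun _ => le_rfl

theorem add_mem_posCone {f g : C₀(X, ℝ)} (hf : f ∈ posCone X) (hg : g ∈ posCone X) :
    f + g ∈ posCone X := fun x => add_nonneg (hf x) (hg x)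

theorem smul_mem_posCone {r : ℝ} (hr : 0 ≤ r) {f : C₀(X, ℝ)} (hf : f ∈ posCone X) :
    r • f ∈ posCone X := fun x => mul_nonneg hr (hf x)

theorem map_smul_of_map_add {T : C₀(X, ℝ) → C₀(Y, ℝ)} (hmap : MapsTo T (posCone X) (posCone Y))
    (hadd : ∀ f ∈ posCone X, ∀ g ∈ posCone X, T (f + g) = T f + T g)
    {r : ℝ} (hr : 0 ≤ r) {f : C₀(X, ℝ)} (hf : f ∈ posCone X) : T (r • f) = r • T f := by
  have hzero : T 0 = 0 := by simpa using hadd 0 zero_mem_posCone 0 zero_mem_posCone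
  have hadd' (s t : ℝ≥0) : T ((s + t : ℝ) • f) = T ((s : ℝ) • f) + T ((t : ℝ) • f) := by
    rw [add_smul (M := C₀(X, ℝ))]
    exact hadd _ (smul_mem_posCone s.2 hf) _ (smul_mem_posCone t.2 hf)
  lift r to ℝ≥0 using hr
  ext y
  let φ : ℝ≥0 →+ ℝ :=
    { toFun s := T ((s : ℝ) • f) y
      map_zero' := by simp [hzero]
      map_add' s t := by simp [hadd' s t] }
  have hφ : Monotone φ := fun s t hst => by
    obtain ⟨d, rfl⟩ := exists_add_of_le hst
    simpa [φ, hadd' s d] using hmap (smul_mem_posCone d.2 hf) y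
  simpa [φ] using φ.apply_eq_mul_apply_one_of_monotone hφ r

end PosCone

namespace ZeroAtInftyContinuousMap

variable {Y : Type*} [TopologicalSpace Y]

theorem apply_le_norm (u : C₀(Y, ℝ)) (y : Y) : u y ≤ ‖u‖ :=
  (le_abs_self _).trans (u.toBCF.norm_coe_le_norm y)

theorem add_apply_le_norm_add (u v : C₀(Y, ℝ)) (y : Y) : u y + v y ≤ ‖u + v‖ :=
  apply_le_norm (u + v) y

theorem norm_le_of_forall_apply_le {u : C₀(Y, ℝ)} (hu : u ∈ posCone Y) {C : ℝ} (hC : 0 ≤ C)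
    (h : ∀ y, u y ≤ C) : ‖u‖ ≤ C := by
  rw [← norm_toBCF_eq_norm, BoundedContinuousFunction.norm_le hC]
  intro y
  simpa [abs_of_nonneg (hu y)] using h y

theorem exists_lt_apply_of_lt_norm [Nonempty Y] {u : C₀(Y, ℝ)} (hu : u ∈ posCone Y) {t : ℝ}
    (ht : t < ‖u‖) : ∃ y, t < u y := by
  by_contra! h
  rw [← norm_toBCF_eq_norm, ← not_le, BoundedContinuousFunction.norm_le_of_nonempty] at ht
  exact ht fun y => by simpa [abs_of_nonneg (hu y)] using h y

theorem norm_add_le_of_le_on_of_eq_zero_off {u v : C₀(Y, ℝ)} (hu : u ∈ posCone Y)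
    (hv : v ∈ posCone Y) {W : Set Y} {N t : ℝ} (ht : 0 ≤ t) (huN : ‖u‖ ≤ N) (hvN : ‖v‖ ≤ N)
    (huW : ∀ z ∈ W, u z ≤ t) (hvW : ∀ z ∉ W, v z = 0) : ‖u + v‖ ≤ N + t := by
  refine norm_le_of_forall_apply_le (add_mem_posCone hu hv)
    (by linarith [norm_nonneg v]) fun z => ?_
  rw [add_apply]
  by_cases hz : z ∈ W
  · linarith [huW z hz, apply_le_norm v z]
  · linarith [hvW z hz, apply_le_norm u z]

theorem exists_mem_posCone_peak [T2Space Y] [LocallyCompactSpace Y] {W : Set Y} (hW : IsOpen W)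
    {y : Y} (hy : y ∈ W) {N : ℝ} (hN : 0 ≤ N) :
    ∃ v ∈ posCone Y, v y = N ∧ ‖v‖ ≤ N ∧ ∀ z ∉ W, v z = 0 := by
  obtain ⟨c, hc1, hc0, hcc, hc01⟩ := exists_continuous_one_zero_of_isCompact
    isCompact_singleton hW.isClosed_compl (disjoint_singleton_left.2 (not_not_intro hy))
  let v : C₀(Y, ℝ) := N • ⟨c, hcc.is_zero_at_infty⟩
  have hv (z : Y) : v z = N * c z := rfl
  have hv_mem : v ∈ posCone Y := fun z => by rw [hv]; exact mul_nonneg hN (hc01 z).1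
  refine ⟨v, hv_mem, by simp [hv, hc1 rfl], ?_, fun z hz => by simp [hv, hc0 hz]⟩
  exact norm_le_of_forall_apply_le hv_mem hN fun z => by
    rw [hv]; exact mul_le_of_le_one_right hN (hc01 z).2

end ZeroAtInftyContinuousMap

open ZeroAtInftyContinuousMap

structure IsNormAdditiveOnPosCone {X Y : Type*} [TopologicalSpace X] [TopologicalSpace Y]
    (T : C₀(X, ℝ) → C₀(Y, ℝ)) : Prop where
  mapsTo : MapsTo T (posCone X) (posCone Y)
  surjOn : SurjOn T (posCone X) (posCone Y)
  norm_map_add : ∀ f ∈ posCone X, ∀ g ∈ posCone X, ‖T (f + g)‖ = ‖T f + T g‖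

namespace IsNormAdditiveOnPosCone

variable {X Y : Type*} [TopologicalSpace X] [TopologicalSpace Y] {T : C₀(X, ℝ) → C₀(Y, ℝ)}
  {f g p : C₀(X, ℝ)}

theorem norm_map_add_add_comm (hT : IsNormAdditiveOnPosCone T)
    (hf : f ∈ posCone X) (hg : g ∈ posCone X) (hp : p ∈ posCone X) :
    ‖T (f + g) + T p‖ = ‖T g + T (f + p)‖ := by
  rw [← hT.norm_map_add _ (add_mem_posCone hf hg) _ hp,
    ← hT.norm_map_add _ hg _ (add_mem_posCone hf hp), add_right_comm, add_comm g]

theorem exists_peak [T2Space Y] [LocallyCompactSpace Y] (hT : IsNormAdditiveOnPosCone T)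
    {W : Set Y} (hW : IsOpen W)
    {y : Y} (hy : y ∈ W) {N : ℝ} (hN : 0 ≤ N) :
    ∃ p ∈ posCone X, T p y = N ∧ ‖T p‖ ≤ N ∧ ∀ z ∉ W, T p z = 0 := by
  obtain ⟨v, hv, hvy, hvN, hvW⟩ := exists_mem_posCone_peak hW hy hN
  obtain ⟨p, hp, rfl⟩ := hT.surjOn hv
  exact ⟨p, hp, hvy, hvN, hvW⟩

variable [T2Space Y] [LocallyCompactSpace Y]

theorem map_add_apply_le_add_norm (hT : IsNormAdditiveOnPosCone T)
    (hf : f ∈ posCone X) (hg : g ∈ posCone X) (y : Y) :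
    T (f + g) y ≤ T f y + ‖T g‖ := by
  refine le_of_forall_pos_le_add fun ε hε => ?_
  have hfy := hT.mapsTo hf y
  obtain ⟨p, hp, hpy, hpN, hpW⟩ := hT.exists_peak
    (isOpen_lt (T f).continuous continuous_const) (show T f y < T f y + ε by linarith)
    (norm_nonneg (T f))
  have hfp : ‖T f + T p‖ ≤ ‖T f‖ + (T f y + ε) :=
    norm_add_le_of_le_on_of_eq_zero_off (hT.mapsTo hf) (hT.mapsTo hp) (by linarith) le_rfl hpN
      (fun z hz => le_of_lt hz) hpW
  suffices ‖T f‖ + T (f + g) y ≤ ‖T g‖ + ‖T f + T p‖ by linarith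
  calc ‖T f‖ + T (f + g) y = T (f + g) y + T p y := by rw [hpy, add_comm]
    _ ≤ ‖T (f + g) + T p‖ := add_apply_le_norm_add _ _ y
    _ = ‖T g + T (f + p)‖ := hT.norm_map_add_add_comm hf hg hp
    _ ≤ ‖T g‖ + ‖T f + T p‖ := by rw [← hT.norm_map_add _ hf _ hp]; exact norm_add_le _ _

theorem map_add_apply_le (hT : IsNormAdditiveOnPosCone T)
    (hf : f ∈ posCone X) (hg : g ∈ posCone X) (y : Y) :
    T (f + g) y ≤ T f y + T g y := by
  refine le_of_forall_pos_le_add fun ε hε => ?_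
  have hfy := hT.mapsTo hf y
  have hgy := hT.mapsTo hg y
  let W : Set Y := {z | T f z < T f y + ε / 2} ∩ {z | T g z < T g y + ε / 2}
  have hW : IsOpen W := (isOpen_lt (T f).continuous continuous_const).inter
    (isOpen_lt (T g).continuous continuous_const)
  obtain ⟨p, hp, hpy, hpN, hpW⟩ := hT.exists_peak hW
    (show y ∈ W from ⟨by simp; linarith, by simp; linarith⟩)
    (add_nonneg (norm_nonneg (T f)) (norm_nonneg (T g)))
  have hgfp : ‖T g + T (f + p)‖ ≤ ‖T f‖ + ‖T g‖ + (T f y + T g y + ε) := by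
    refine norm_le_of_forall_apply_le
      (add_mem_posCone (hT.mapsTo hg) (hT.mapsTo (add_mem_posCone hf hp)))
      (by linarith [norm_nonneg (T f), norm_nonneg (T g)]) fun z => ?_
    rw [ZeroAtInftyContinuousMap.add_apply]
    by_cases hz : z ∈ W
    · have hfz : T f z < T f y + ε / 2 := hz.1
      have hgz : T g z < T g y + ε / 2 := hz.2
      linarith [hT.map_add_apply_le_add_norm hf hp z]
    · have hpf := hT.map_add_apply_le_add_norm hp hf z
      rw [add_comm p, hpW z hz] at hpf
      linarith [apply_le_norm (T g) z]
  suffices ‖T f‖ + ‖T g‖ + T (f + g) y ≤ ‖T g + T (f + p)‖ by linarith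
  calc ‖T f‖ + ‖T g‖ + T (f + g) y = T (f + g) y + T p y := by rw [hpy, add_comm]
    _ ≤ ‖T (f + g) + T p‖ := add_apply_le_norm_add _ _ y
    _ = ‖T g + T (f + p)‖ := hT.norm_map_add_add_comm hf hg hp

theorem add_apply_le_map_add (hT : IsNormAdditiveOnPosCone T)
    (hf : f ∈ posCone X) (hg : g ∈ posCone X) (y : Y) :
    T f y + T g y ≤ T (f + g) y := by
  have : Nonempty Y := ⟨y⟩
  have hfg := add_mem_posCone hf hg
  have hfy := hT.mapsTo hf y
  have hfgy := hT.mapsTo hfg y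
  refine le_of_forall_pos_le_add fun ε hε => ?_
  let W : Set Y := {z | T (f + g) z < T (f + g) y + ε / 3} ∩ {z | T g y - ε / 3 < T g z}
  have hW : IsOpen W := (isOpen_lt (T (f + g)).continuous continuous_const).inter
    (isOpen_lt continuous_const (T g).continuous)
  set N := ‖T (f + g)‖ + ‖T f‖ + ε
  have hN : ‖T (f + g)‖ + ‖T f‖ < N := by linarith
  obtain ⟨p, hp, hpy, hpN, hpW⟩ := hT.exists_peak (N := N) hW
    (show y ∈ W from ⟨by simp; linarith, by simp; linarith⟩)
    (by linarith [norm_nonneg (T f), norm_nonneg (T (f + g))])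
  have hfgp : ‖T (f + g) + T p‖ ≤ N + (T (f + g) y + ε / 3) :=
    norm_add_le_of_le_on_of_eq_zero_off (hT.mapsTo hfg) (hT.mapsTo hp) (by linarith)
      (by linarith [norm_nonneg (T f)]) hpN (fun z hz => le_of_lt hz.1) hpW
  -- `T (f + p)` almost attains its norm `≥ T f y + N` at some `y'`, which must lie in `W`
  obtain ⟨y', hy'⟩ := exists_lt_apply_of_lt_norm (hT.mapsTo (add_mem_posCone hf hp))
    (show ‖T (f + p)‖ - ε / 3 < ‖T (f + p)‖ by linarith)
  have hfp : T f y + N ≤ ‖T (f + p)‖ := by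
    rw [hT.norm_map_add _ hf _ hp, ← hpy]; exact add_apply_le_norm_add _ _ y
  have hy'W : y' ∈ W := by
    by_contra hy'W
    have := hT.map_add_apply_le hf hp y'
    linarith [hpW y' hy'W, apply_le_norm (T f) y', norm_nonneg (T (f + g))]
  have hgy' : T g y - ε / 3 < T g y' := hy'W.2
  have := calc T g y' + T (f + p) y' ≤ ‖T g + T (f + p)‖ := add_apply_le_norm_add _ _ y'
    _ = ‖T (f + g) + T p‖ := (hT.norm_map_add_add_comm hf hg hp).symm
  linarith

theorem map_add (hT : IsNormAdditiveOnPosCone T)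
    (hf : f ∈ posCone X) (hg : g ∈ posCone X) : T (f + g) = T f + T g :=
  ext fun y => le_antisymm (hT.map_add_apply_le hf hg y) (hT.add_apply_le_map_add hf hg y)

end IsNormAdditiveOnPosCone

theorem stmt17_general {X Y : Type*} [TopologicalSpace X]
    [TopologicalSpace Y] [T2Space Y] [LocallyCompactSpace Y]
    (T : C₀(X, ℝ) → C₀(Y, ℝ))
    (hmap : ∀ f ∈ posCone X, T f ∈ posCone Y)
    (hsurj : Set.SurjOn T (posCone X) (posCone Y))
    (hnorm : ∀ f ∈ posCone X, ∀ g ∈ posCone X, ‖T (f + g)‖ = ‖T f + T g‖) :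
    (∀ f ∈ posCone X, ∀ g ∈ posCone X, T (f + g) = T f + T g) ∧
      (∀ r : ℝ, 0 ≤ r → ∀ f ∈ posCone X, T (r • f) = r • T f) := by
  have hT : IsNormAdditiveOnPosCone T := ⟨hmap, hsurj, hnorm⟩
  have hadd (f) (hf : f ∈ posCone X) (g) (hg : g ∈ posCone X) : T (f + g) = T f + T g :=
    hT.map_add hf hg
  exact ⟨hadd, fun r hr f hf => map_smul_of_map_add hmap hadd hr hf⟩

/-- **Hirota's theorem (Lemma 2.1).** A surjective map `T : C₀(X)⁺ → C₀(Y)⁺` with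
`‖T(f+g)‖ = ‖Tf + Tg‖` for all `f, g ∈ C₀(X)⁺` is additive and positively
homogeneous. -/
theorem stmt17 {X Y : Type*} [TopologicalSpace X] [T2Space X] [LocallyCompactSpace X]
    [TopologicalSpace Y] [T2Space Y] [LocallyCompactSpace Y]
    (T : C₀(X, ℝ) → C₀(Y, ℝ))
    (hmap : ∀ f ∈ posCone X, T f ∈ posCone Y)
    (hsurj : Set.SurjOn T (posCone X) (posCone Y))
    (hnorm : ∀ f ∈ posCone X, ∀ g ∈ posCone X, ‖T (f + g)‖ = ‖T f + T g‖) :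
    (∀ f ∈ posCone X, ∀ g ∈ posCone X, T (f + g) = T f + T g) ∧
      (∀ r : ℝ, 0 ≤ r → ∀ f ∈ posCone X, T (r • f) = r • T f) :=
  stmt17_general T hmap hsurj hnorm
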